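/- arXiv:2208.11872 — 4 statements merged into one kernel-verified Lean document; each statement's English description precedes it below -/
import Mathlib

section
/- If $I \subset [0,1]$ satisfies the DCC, then the set $I_+ = \{0\} \cup \{ j \in [0,1] \mid j = i_1 + \cdots + i_l \text{ for some } l \geq 1 \text{ and } i_1, \dots, i_l \in I \}$ also satisfies the DCC. -/
/-!
Every element of `I₊` lies in the additive monoid generated by `I`. In a linear order the DCC
is partial well-orderedness, and by Higman's lemma the monoid generated by a partially
well-ordered set of nonnegative elements is again partially well-ordered.
-/

def SatisfiesDCC (S : Set ℝ) : Prop :=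
  ¬ ∃ f : ℕ → ℝ, (∀ n, f n ∈ S) ∧ ∀ n, f (n + 1) < f n

def SatisfiesACC (S : Set ℝ) : Prop :=
  ¬ ∃ f : ℕ → ℝ, (∀ n, f n ∈ S) ∧ ∀ n, f n < f (n + 1)

def IPlus (I : Set ℝ) : Set ℝ :=
  {0} ∪ {j | j ∈ Set.Icc (0 : ℝ) 1 ∧
    ∃ l : List ℝ, l ≠ [] ∧ (∀ x ∈ l, x ∈ I) ∧ l.sum = j}

def DSet (I : Set ℝ) : Set ℝ :=
  {a | ∃ m : ℕ, 0 < m ∧ ∃ f ∈ IPlus I, a = (m - 1 + f) / m}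

lemma satisfiesDCC_iff_isWF (S : Set ℝ) : SatisfiesDCC S ↔ S.IsWF := by
  rw [Set.isWF_iff_no_descending_seq]
  constructor
  · intro h f hf hmem
    exact h ⟨f, hmem, fun n => hf n.lt_succ_self⟩
  · rintro h ⟨f, hmem, hlt⟩
    exact h f (strictAnti_nat_of_succ_lt hlt) hmem

lemma iPlus_subset_addSubmonoidClosure (I : Set ℝ) : IPlus I ⊆ AddSubmonoid.closure I := by
  rintro x (rfl | ⟨-, l, -, hl, rfl⟩)
  · exact zero_mem _
  · exact list_sum_mem fun a ha => AddSubmonoid.subset_closure (hl a ha)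

theorem dcc_IPlus (I : Set ℝ) (hI : I ⊆ Set.Icc 0 1)
    (hdcc : SatisfiesDCC I) : SatisfiesDCC (IPlus I) := by
  rw [satisfiesDCC_iff_isWF] at hdcc ⊢
  have hclosure : (AddSubmonoid.closure I : Set ℝ).IsWF :=
    (hdcc.isPWO.addSubmonoid_closure fun _ hx => (hI hx).1).isWF
  exact hclosure.mono (iPlus_subset_addSubmonoidClosure I)
end

section
/- If $S$ is a set of positive real numbers satisfying the ACC, then the set $\{ s/k \mid s \in S,\ k \in \mathbb{Z}_{>0} \}$ also satisfies the ACC. -/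
/-!
An increasing sequence `s n / k n` in the quotient set is bounded below by its first term
`c > 0`, while `S` is bounded above by some `M` because it satisfies the ACC. Hence every
denominator is at most `M / c`, so the sequence lives in a finite union of the sets `S / k`,
each of which satisfies the ACC as a monotone image of `S`.
-/

theorem satisfiesACC_iff_forall_strictMono {S : Set ℝ} :
    SatisfiesACC S ↔ ∀ f : ℕ → ℝ, StrictMono f → ¬ ∀ n, f n ∈ S :=
  ⟨fun h f hf hfS => h ⟨f, hfS, fun n => hf n.lt_succ_self⟩,
    fun h ⟨f, hfS, hlt⟩ => h f (strictMono_nat_of_lt_succ hlt) hfS⟩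

theorem satisfiesACC_iff_wellFoundedOn {S : Set ℝ} :
    SatisfiesACC S ↔ S.WellFoundedOn (· > ·) := by
  rw [satisfiesACC_iff_forall_strictMono, Set.wellFoundedOn_iff_no_descending_seq]
  exact ⟨fun H f => H f fun _ _ => f.map_rel_iff.2,
    fun H f hf => H ⟨⟨f, hf.injective⟩, hf.lt_iff_lt⟩⟩

namespace SatisfiesACC

variable {S T : Set ℝ}

theorem mono (hT : SatisfiesACC T) (hST : S ⊆ T) : SatisfiesACC S :=
  fun ⟨f, hfS, hlt⟩ => hT ⟨f, fun n => hST (hfS n), hlt⟩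

theorem of_forall_inter_Ici (h : ∀ c ∈ T, SatisfiesACC (T ∩ Set.Ici c)) : SatisfiesACC T :=
  fun ⟨f, hfT, hlt⟩ => h (f 0) (hfT 0)
    ⟨f, fun n => ⟨hfT n, (strictMono_nat_of_lt_succ hlt).monotone n.zero_le⟩, hlt⟩

theorem image (hS : SatisfiesACC S) {g : ℝ → ℝ} (hg : MonotoneOn g S) :
    SatisfiesACC (g '' S) := by
  rw [satisfiesACC_iff_wellFoundedOn, Set.wellFoundedOn_image] at *
  exact hS.mono' fun a ha b hb h => hg.reflect_lt hb ha h

theorem biUnion {ι : Type*} (t : Finset ι) {S : ι → Set ℝ} (h : ∀ i ∈ t, SatisfiesACC (S i)) :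
    SatisfiesACC (⋃ i ∈ t, S i) := by
  simp only [satisfiesACC_iff_wellFoundedOn, ← Finset.sup_set_eq_biUnion] at *
  exact (Finset.wellFoundedOn_sup t).2 h

theorem bddAbove (hS : SatisfiesACC S) : BddAbove S := by
  by_contra hunb
  choose next hnextS hlt using not_bddAbove_iff.1 hunb
  refine hS ⟨fun n => next (next^[n] 0), fun n => hnextS _, fun n => ?_⟩
  show next (next^[n] 0) < next (next^[n + 1] 0)
  rw [Function.iterate_succ_apply']
  exact hlt _

end SatisfiesACC

theorem acc_div_nat (S : Set ℝ) (hS : S ⊆ Set.Ioi 0)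
    (hacc : SatisfiesACC S) :
    SatisfiesACC {x : ℝ | ∃ s ∈ S, ∃ k : ℕ, 0 < k ∧ x = s / k} := by
  obtain ⟨M, hM⟩ := hacc.bddAbove
  refine SatisfiesACC.of_forall_inter_Ici fun c ⟨s, hs, k, hk, hc⟩ => ?_
  have hc0 : 0 < c := hc ▸ div_pos (hS hs) (Nat.cast_pos.2 hk)
  obtain ⟨N, hN⟩ := exists_nat_ge (M / c)
  refine (SatisfiesACC.biUnion (Finset.Icc 1 N) fun k _ =>
    hacc.image ((monotone_div_right_of_nonneg (k.cast_nonneg (α := ℝ))).monotoneOn S)).mono ?_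
  rintro _ ⟨⟨s, hs, k, hk, rfl⟩, hcx⟩
  have hk0 : (0 : ℝ) < k := Nat.cast_pos.2 hk
  have hkc : k * c ≤ M := by
    calc k * c ≤ k * (s / k) := mul_le_mul_of_nonneg_left hcx hk0.le
      _ = s := mul_div_cancel₀ s hk0.ne'
      _ ≤ M := hM hs
  have hkN : (k : ℝ) ≤ N := ((le_div_iff₀ hc0).2 hkc).trans hN
  exact Set.mem_biUnion (Finset.mem_Icc.2 ⟨hk, Nat.cast_le.1 hkN⟩) ⟨s, hs, rfl⟩
end

section
/- Fix a finite set $K_0 \subset [0,1]$ and a set $K \subset [0,1]$ satisfying the DCC. Then the set of positive real numbers $x$ such that $(m - 1 + f + kx)/m \in K_0$ for some positive integers $m, k$ and some $f \in K_+$ satisfies the ACC. -/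
/-!
Write `y = (m - 1 + f + k x) / m ∈ K₀`. Then `1 - k x = f + m (1 - y)` is a sum of elements of the
well-founded set `K ∪ (1 - K₀)` of nonnegative reals, so it lies in a partially well-ordered
additive monoid. Along a strictly increasing sequence `xₙ` with multipliers `kₙ`, Dickson's lemma
gives `i < j` with `kᵢ ≤ kⱼ` and `1 - kᵢ xᵢ ≤ 1 - kⱼ xⱼ`, whereas `kⱼ xⱼ > kᵢ xᵢ`.
-/

open Set

theorem SatisfiesDCC.isWF {S : Set ℝ} (h : SatisfiesDCC S) : S.IsWF :=
  isWF_iff_no_descending_seq.2 fun f hf hmem => h ⟨f, hmem, fun n => hf n.lt_succ_self⟩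

theorem iPlus_subset_addSubmonoid_closure (K : Set ℝ) :
    IPlus K ⊆ AddSubmonoid.closure K := by
  rintro j (rfl | ⟨-, l, -, hl, rfl⟩)
  · exact zero_mem _
  · exact list_sum_mem fun x hx => AddSubmonoid.subset_closure (hl x hx)

theorem one_sub_mul_mem_addSubmonoid_closure {K K₀ : Set ℝ} {m : ℕ} (hm : 0 < m) {k x f : ℝ}
    (hf : f ∈ IPlus K) (hy : (m - 1 + f + k * x) / m ∈ K₀) :
    1 - k * x ∈ AddSubmonoid.closure (K ∪ (1 - ·) '' K₀) := by
  set y := (m - 1 + f + k * x) / m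
  have hm' : (m : ℝ) ≠ 0 := by positivity
  have hdecomp : 1 - k * x = f + m • (1 - y) := by
    simp only [y, nsmul_eq_mul]
    field_simp
    ring
  have hf' : f ∈ AddSubmonoid.closure (K ∪ (1 - ·) '' K₀) :=
    AddSubmonoid.closure_mono subset_union_left (iPlus_subset_addSubmonoid_closure K hf)
  have hy' : 1 - y ∈ AddSubmonoid.closure (K ∪ (1 - ·) '' K₀) :=
    AddSubmonoid.subset_closure (mem_union_right K (mem_image_of_mem (1 - ·) hy))
  rw [hdecomp]
  exact add_mem hf' (nsmul_mem hy' m)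

theorem satisfiesACC_of_forall_one_sub_mul_mem {S T : Set ℝ} (hT : T.IsPWO)
    (hS : ∀ x ∈ S, 0 ≤ x ∧ ∃ k : ℕ, 0 < k ∧ 1 - k * x ∈ T) : SatisfiesACC S := by
  rintro ⟨x, hxS, hx⟩
  choose hx0 k hk hkT using fun n => hS _ (hxS n)
  obtain ⟨i, j, hij, hkij, hle⟩ := ((isPWO_of_wellQuasiOrderedLE univ).prod hT).exists_lt
    (f := fun n => (k n, 1 - k n * x n)) fun n => ⟨trivial, hkT n⟩
  have hxij : x i < x j := strictMono_nat_of_lt_succ hx hij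
  have hkij' : (k i : ℝ) ≤ k j := by exact_mod_cast hkij
  have hki : (0 : ℝ) < k i := by exact_mod_cast hk i
  have hxj := hx0 j
  have hlt : 1 - k j * x j < 1 - k i * x i :=
    calc 1 - k j * x j ≤ 1 - k i * x j := by gcongr
      _ < 1 - k i * x i := by gcongr
  exact hlt.not_ge hle

theorem acc_lemma_5_2 (K₀ K : Set ℝ) (hfin : K₀.Finite) (hK₀ : K₀ ⊆ Set.Icc 0 1)
    (hK : K ⊆ Set.Icc 0 1) (hdcc : SatisfiesDCC K) :
    SatisfiesACC {x : ℝ | 0 < x ∧ ∃ m k : ℕ, 0 < m ∧ 0 < k ∧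
      ∃ f ∈ IPlus K, (m - 1 + f + k * x) / m ∈ K₀} := by
  have hnonneg : ∀ t ∈ K ∪ (1 - ·) '' K₀, 0 ≤ t := by
    rintro t (ht | ⟨y, hy, rfl⟩)
    · exact (hK ht).1
    · exact sub_nonneg.2 (hK₀ hy).2
  have hwf : (K ∪ (1 - ·) '' K₀).IsWF := hdcc.isWF.union (hfin.image _).isWF
  refine satisfiesACC_of_forall_one_sub_mul_mem (hwf.isPWO.addSubmonoid_closure hnonneg) ?_
  rintro x ⟨hx, m, k, hm, hk, f, hf, hy⟩
  exact ⟨hx.le, k, hk, one_sub_mul_mem_addSubmonoid_closure hm hf hy⟩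
end

section
/- Let $I \subset [0,1]$ and $J \subset \mathbb{R}_{>0}$ both satisfy the DCC, and let $(c_i)$ be a nondecreasing sequence of positive reals. Then the set $K = I \cup \{ c_i \alpha \in [0,1] \mid i \in \mathbb{Z}_{>0},\ \alpha \in J \} \cup \{ \beta + c_i \gamma \in [0,1] \mid i \in \mathbb{Z}_{>0},\ \beta \in I,\ \gamma \in J \} \cup \{1\}$ satisfies the DCC. -/
/-! For subsets of `ℝ`, DCC is partial well-order. The range of a monotone sequence is
partially well-ordered, and partial well-order survives sums of sets and products of nonnegative
sets, being the image of a product under a monotone map. So `K` lies in a finite union of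
partially well-ordered sets built from `I`, `J` and the range of `c`. -/

open scoped Pointwise

lemma satisfiesDCC_iff_isPWO (S : Set ℝ) : SatisfiesDCC S ↔ S.IsPWO := by
  rw [Set.isPWO_iff_isWF, Set.isWF_iff_no_descending_seq, SatisfiesDCC, not_exists]
  refine forall_congr' fun f => ⟨fun h hf hmem => h ⟨hmem, fun n => hf n.lt_succ_self⟩, ?_⟩
  rintro h ⟨hmem, hdec⟩
  exact h (strictAnti_nat_of_succ_lt hdec) hmem

lemma Set.isPWO_range_of_monotone {α β : Type*} [Preorder α] [WellQuasiOrderedLE α]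
    [Preorder β] {f : α → β} (hf : Monotone f) : (Set.range f).IsPWO := by
  simpa only [Set.image_univ] using (Set.isPWO_of_wellQuasiOrderedLE Set.univ).image_of_monotone hf

lemma Set.IsPWO.mul_of_nonneg {α : Type*} [Mul α] [Zero α] [Preorder α] [PosMulMono α]
    [MulPosMono α] {s t : Set α} (hs : s.IsPWO) (ht : t.IsPWO) (hs₀ : s ⊆ Set.Ici 0)
    (ht₀ : t ⊆ Set.Ici 0) : (s * t).IsPWO := by
  rw [← Set.image_mul_prod]
  refine (hs.prod ht).image_of_monotoneOn ?_
  rintro ⟨a, b⟩ ⟨-, hb⟩ ⟨a', b'⟩ ⟨ha', -⟩ ⟨hab, hbb⟩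
  exact mul_le_mul hab hbb (ht₀ hb) (hs₀ ha')

theorem dcc_auxiliary_set_general (I J : Set ℝ)
    (hJ : J ⊆ Set.Ioi 0) (hIdcc : SatisfiesDCC I) (hJdcc : SatisfiesDCC J)
    (c : ℕ → ℝ) (hc : Monotone c) (hcpos : ∀ i, 0 < c i) :
    SatisfiesDCC (I ∪
      {x ∈ Set.Icc (0 : ℝ) 1 | ∃ i : ℕ, ∃ α ∈ J, x = c i * α} ∪
      {x ∈ Set.Icc (0 : ℝ) 1 | ∃ i : ℕ, ∃ β ∈ I, ∃ γ ∈ J, x = β + c i * γ} ∪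
      {1}) := by
  simp only [satisfiesDCC_iff_isPWO] at *
  have hcJ : (Set.range c * J).IsPWO :=
    (Set.isPWO_range_of_monotone hc).mul_of_nonneg hJdcc
      (Set.range_subset_iff.2 fun i => (hcpos i).le) (hJ.trans Set.Ioi_subset_Ici_self)
  have hS₁ : {x ∈ Set.Icc (0 : ℝ) 1 | ∃ i : ℕ, ∃ α ∈ J, x = c i * α}.IsPWO := by
    refine hcJ.mono ?_
    rintro _ ⟨-, i, α, hα, rfl⟩
    exact ⟨c i, ⟨i, rfl⟩, α, hα, rfl⟩
  have hS₂ : {x ∈ Set.Icc (0 : ℝ) 1 | ∃ i : ℕ, ∃ β ∈ I, ∃ γ ∈ J, x = β + c i * γ}.IsPWO := by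
    refine (hIdcc.add hcJ).mono ?_
    rintro _ ⟨-, i, β, hβ, γ, hγ, rfl⟩
    exact ⟨β, hβ, c i * γ, ⟨c i, ⟨i, rfl⟩, γ, hγ, rfl⟩, rfl⟩
  exact ((hIdcc.union hS₁).union hS₂).union (Set.isPWO_singleton 1)

theorem dcc_auxiliary_set (I J : Set ℝ) (hI : I ⊆ Set.Icc 0 1)
    (hJ : J ⊆ Set.Ioi 0) (hIdcc : SatisfiesDCC I) (hJdcc : SatisfiesDCC J)
    (c : ℕ → ℝ) (hc : Monotone c) (hcpos : ∀ i, 0 < c i) :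
    SatisfiesDCC (I ∪
      {x ∈ Set.Icc (0 : ℝ) 1 | ∃ i : ℕ, ∃ α ∈ J, x = c i * α} ∪
      {x ∈ Set.Icc (0 : ℝ) 1 | ∃ i : ℕ, ∃ β ∈ I, ∃ γ ∈ J, x = β + c i * γ} ∪
      {1}) :=
  dcc_auxiliary_set_general I J hJ hIdcc hJdcc c hc hcpos
end
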